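/- Continuity equation: in the continuum setup, assume in addition that for every t the map φ(t,·) is a C¹ diffeomorphism of ℝⁿ, that ρ : ℝ × ℝⁿ → ℝ is continuously differentiable, that ρ₀ : ℝⁿ → ℝ is a given function, and that the mass relation ρ₀(X) = ρ(t, φ(t,X)) · det F(t,X) holds for all (t,X). Then ∂ρ/∂t(t,x) + div_x(ρ u)(t,x) = 0 for every (t,x) ∈ ℝ × ℝⁿ. -/

import Mathlib

/-!
Fix `(t, x)` and let `X` be the preimage of `x` under the diffeomorphism `φ(t, ·)`. Along the
trajectory `s ↦ φ(s, X)` the mass relation says that `ρ(s, φ(s, X)) · J(s, X)` is constant.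
Since `∂φ/∂t = u ∘ φ` and second derivatives of `φ` commute, the deformation gradient satisfies
`Ḟ = (∇u) F`, so Jacobi's formula gives `J̇ = (div u) J`. Differentiating the product yields
`(Dρ/Dt + ρ div u) J = 0`, and `J ≠ 0` because `φ(t, ·)` has a differentiable inverse. In
coordinates, `Dρ/Dt + ρ div u` is exactly `∂ρ/∂t + div (ρ u)`.
-/

open ContinuousLinearMap

variable {𝕜 : Type*} [NontriviallyNormedField 𝕜]

section Jacobi

attribute [local instance] Matrix.normedAddCommGroup Matrix.normedSpace

namespace Matrix

variable {ι : Type*} [Fintype ι] [DecidableEq ι]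

variable (𝕜 ι) in
noncomputable def detRowContinuousMultilinear :
    ContinuousMultilinearMap 𝕜 (fun _ : ι => ι → 𝕜) 𝕜 :=
  { (detRowAlternating : (ι → 𝕜) [⋀^ι]→ₗ[𝕜] 𝕜).toMultilinearMap with
    cont := continuous_id.matrix_det }

theorem hasDerivAt_det {M : 𝕜 → Matrix ι ι 𝕜} {M' : Matrix ι ι 𝕜} {t : 𝕜}
    (hM : HasDerivAt M M' t) :
    HasDerivAt (fun s => (M s).det) (∑ i, ((M t).updateRow i (M' i)).det) t :=
  (((detRowContinuousMultilinear 𝕜 ι).hasFDerivAt (M t)).comp_hasDerivAt t hM).congr_deriv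
    (ContinuousMultilinearMap.linearDeriv_apply _ _ _)

theorem sum_det_updateRow_mul_self (G A : Matrix ι ι 𝕜) :
    ∑ i, (A.updateRow i ((G * A) i)).det = G.trace * A.det := by
  simp only [trace, diag, Finset.sum_mul]
  refine Finset.sum_congr rfl fun i _ => ?_
  have hrow : (G * A) i = ∑ k, G i k • A k := by
    ext j
    simp [mul_apply, Finset.sum_apply]
  rw [hrow, det_updateRow_sum, smul_eq_mul]

end Matrix

theorem ContinuousLinearMap.hasDerivAt_det_of_hasDerivAt_eq_comp [CompleteSpace 𝕜]
    {E : Type*} [NormedAddCommGroup E] [NormedSpace 𝕜 E] [FiniteDimensional 𝕜 E]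
    {L : 𝕜 → E →L[𝕜] E} {G : E →L[𝕜] E} {t : 𝕜} (hL : HasDerivAt L (G ∘L L t) t) :
    HasDerivAt (fun s => (L s).det) (LinearMap.trace 𝕜 E G * (L t).det) t := by
  let b := Module.finBasis 𝕜 E
  let toMatrix : (E →L[𝕜] E) →L[𝕜] Matrix (Fin _) (Fin _) 𝕜 :=
    ((LinearMap.toMatrix b b).toLinearMap ∘ₗ coeLM 𝕜).toContinuousLinearMap
  have hM : HasDerivAt (fun s => toMatrix (L s)) (LinearMap.toMatrix b b G * toMatrix (L t)) t :=
    (toMatrix.hasFDerivAt.comp_hasDerivAt t hL).congr_deriv (LinearMap.toMatrix_comp b b b _ _)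
  have hdet := Matrix.hasDerivAt_det hM
  simp only [Matrix.sum_det_updateRow_mul_self, ← LinearMap.trace_eq_matrix_trace] at hdet
  simpa [toMatrix, LinearMap.det_toMatrix] using hdet

end Jacobi

theorem ContinuousLinearMap.det_ne_zero_of_rightInverse {E : Type*} [NormedAddCommGroup E]
    [NormedSpace 𝕜 E] {f g : E → E} {A : E →L[𝕜] E} {x : E} (hf : HasFDerivAt f A (g x))
    (hg : DifferentiableAt 𝕜 g x) (hfg : Function.RightInverse g f) :
    A.det ≠ 0 := by
  have hid : A ∘L fderiv 𝕜 g x = .id 𝕜 E := by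
    have hcomp := hf.comp x hg.hasFDerivAt
    rw [hfg.comp_eq_id] at hcomp
    exact hcomp.unique (hasFDerivAt_id x)
  have hdet : A.det * (fderiv 𝕜 g x).det = 1 := by
    rw [det, det, ← LinearMap.det_comp, ← toLinearMap_comp, hid, coe_id, LinearMap.det_id]
  exact left_ne_zero_of_mul_eq_one hdet

section SpaceTime

variable {E F : Type*} [NormedAddCommGroup E] [NormedSpace ℝ E] [NormedAddCommGroup F]
  [NormedSpace ℝ F]

noncomputable def spatialFDeriv (f : ℝ × E → F) (p : ℝ × E) : E →L[ℝ] F :=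
  fderiv ℝ f p ∘L inr ℝ ℝ E

theorem DifferentiableAt.hasFDerivAt_spatialFDeriv {f : ℝ × E → F} {t : ℝ} {X : E}
    (hf : DifferentiableAt ℝ f (t, X)) :
    HasFDerivAt (fun Y => f (t, Y)) (spatialFDeriv f (t, X)) X :=
  hf.hasFDerivAt.comp X (hasFDerivAt_prodMk_right t X)

theorem hasDerivAt_comp_trajectory {φ : ℝ × E → E} {f : ℝ × E → F} {t : ℝ} {X : E}
    (hφ : DifferentiableAt ℝ φ (t, X)) (hf : DifferentiableAt ℝ f (t, φ (t, X))) :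
    HasDerivAt (fun s => f (s, φ (s, X)))
      (fderiv ℝ f (t, φ (t, X)) (1, fderiv ℝ φ (t, X) (1, 0))) t := by
  have hline : HasDerivAt (fun s : ℝ => (s, X)) (1, 0) t :=
    (hasDerivAt_id t).prodMk (hasDerivAt_const t X)
  exact hf.hasFDerivAt.comp_hasDerivAt t
    ((hasDerivAt_id t).prodMk (hφ.hasFDerivAt.comp_hasDerivAt t hline))

theorem hasDerivAt_spatialFDeriv_of_flow {φ u : ℝ × E → E}
    (hflow : ∀ t X, fderiv ℝ φ (t, X) (1, 0) = u (t, φ (t, X))) {t : ℝ} {X : E}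
    (hφ : ContDiffAt ℝ 2 φ (t, X)) (hu : DifferentiableAt ℝ u (t, φ (t, X))) :
    HasDerivAt (fun s => spatialFDeriv φ (s, X))
      (spatialFDeriv u (t, φ (t, X)) ∘L spatialFDeriv φ (t, X)) t := by
  let B := fderiv ℝ (fderiv ℝ φ) (t, X)
  have hB : HasFDerivAt (fderiv ℝ φ) B (t, X) :=
    ((hφ.fderiv_right le_rfl).differentiableAt one_ne_zero).hasFDerivAt
  have hline : HasDerivAt (fun s : ℝ => (s, X)) (1, 0) t :=
    (hasDerivAt_id t).prodMk (hasDerivAt_const t X)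
  have hderiv : HasDerivAt (fun s => spatialFDeriv φ (s, X)) (B (1, 0) ∘L inr ℝ ℝ E) t := by
    have hc : HasDerivAt (fun s => fderiv ℝ φ (s, X)) (B (1, 0)) t := hB.comp_hasDerivAt t hline
    have hd : HasDerivAt (fun _ : ℝ => inr ℝ ℝ E) 0 t := hasDerivAt_const t _
    simpa [spatialFDeriv] using hc.clm_comp hd
  refine hderiv.congr_deriv (ext fun v => ?_)
  -- both sides are the derivative of `p ↦ ∂φ/∂t p = u (p.1, φ p)` in the direction `(0, v)`
  have hvel : HasFDerivAt (fun p => fderiv ℝ φ p (1, 0)) (apply ℝ E (1, 0) ∘L B) (t, X) :=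
    HasFDerivAt.comp (g := apply ℝ E (1, 0)) (t, X) (apply ℝ E (1, 0)).hasFDerivAt hB
  have hvel' : HasFDerivAt (fun p => fderiv ℝ φ p (1, 0))
      (fderiv ℝ u (t, φ (t, X)) ∘L (fst ℝ ℝ E).prod (fderiv ℝ φ (t, X))) (t, X) := by
    have hfun : (fun p : ℝ × E => fderiv ℝ φ p (1, 0)) = fun p => u (p.1, φ p) :=
      funext fun p => hflow p.1 p.2
    rw [hfun]
    exact hu.hasFDerivAt.comp (t, X)
      (hasFDerivAt_fst.prodMk (hφ.differentiableAt two_ne_zero).hasFDerivAt)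
  calc B (1, 0) (0, v) = B (0, v) (1, 0) := (hφ.isSymmSndFDerivAt (by simp)).eq _ _
    _ = _ := congrArg (· (0, v)) (hvel.unique hvel')

theorem fderiv_apply_velocity_add_mul_trace_eq_zero [FiniteDimensional ℝ E] {φ u : ℝ × E → E}
    {ρ : ℝ × E → ℝ} (hflow : ∀ t X, fderiv ℝ φ (t, X) (1, 0) = u (t, φ (t, X))) {X : E} {m : ℝ}
    (hmass : ∀ s, ρ (s, φ (s, X)) * (spatialFDeriv φ (s, X)).det = m) {t : ℝ}
    (hφ : ContDiffAt ℝ 2 φ (t, X)) (hu : DifferentiableAt ℝ u (t, φ (t, X)))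
    (hρ : DifferentiableAt ℝ ρ (t, φ (t, X))) (hJ : (spatialFDeriv φ (t, X)).det ≠ 0) :
    fderiv ℝ ρ (t, φ (t, X)) (1, u (t, φ (t, X)))
      + ρ (t, φ (t, X)) * LinearMap.trace ℝ E (spatialFDeriv u (t, φ (t, X))) = 0 := by
  have hdetJ := hasDerivAt_det_of_hasDerivAt_eq_comp (hasDerivAt_spatialFDeriv_of_flow hflow hφ hu)
  have hρt := hasDerivAt_comp_trajectory (hφ.differentiableAt two_ne_zero) hρ
  rw [hflow] at hρt
  have hconst : HasDerivAt (fun s => ρ (s, φ (s, X)) * (spatialFDeriv φ (s, X)).det) 0 t := by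
    simpa only [hmass] using hasDerivAt_const t m
  have hzero := (hρt.mul hdetJ).unique hconst
  have hfactor : (fderiv ℝ ρ (t, φ (t, X)) (1, u (t, φ (t, X)))
      + ρ (t, φ (t, X)) * LinearMap.trace ℝ E (spatialFDeriv u (t, φ (t, X))))
      * (spatialFDeriv φ (t, X)).det = 0 := by
    linear_combination hzero
  exact (mul_eq_zero.1 hfactor).resolve_right hJ

end SpaceTime

section Coordinates

variable {ι : Type*} [Fintype ι]

theorem fderiv_mul_coord_apply {ρ : ℝ × (ι → ℝ) → ℝ} {u : ℝ × (ι → ℝ) → ι → ℝ}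
    {p : ℝ × (ι → ℝ)} (hρ : DifferentiableAt ℝ ρ p) (hu : DifferentiableAt ℝ u p) (a : ι)
    (w : ℝ × (ι → ℝ)) :
    fderiv ℝ (fun y => ρ y * u y a) p w = ρ p * fderiv ℝ u p w a + u p a * fderiv ℝ ρ p w := by
  have hua : HasFDerivAt (fun y => u y a) (proj a ∘L fderiv ℝ u p) p :=
    HasFDerivAt.comp (g := fun v : ι → ℝ => v a) p (hasFDerivAt_apply a (u p)) hu.hasFDerivAt
  rw [(hρ.hasFDerivAt.fun_mul hua).fderiv]
  simp

variable [DecidableEq ι]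

theorem LinearMap.trace_eq_sum_apply_single (L : (ι → ℝ) →ₗ[ℝ] ι → ℝ) :
    LinearMap.trace ℝ _ L = ∑ a, L (Pi.single a 1) a := by
  rw [LinearMap.trace_eq_matrix_trace ℝ (Pi.basisFun ℝ ι), LinearMap.toMatrix_eq_toMatrix']
  simp [Matrix.trace, LinearMap.toMatrix'_apply]

theorem ContinuousLinearMap.apply_one_eq_add_sum {F : Type*} [NormedAddCommGroup F]
    [NormedSpace ℝ F] (L : ℝ × (ι → ℝ) →L[ℝ] F) (v : ι → ℝ) :
    L (1, v) = L (1, 0) + ∑ a, v a • L (0, Pi.single a 1) := by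
  have hv : ((1 : ℝ), v) = (1, 0) + ∑ a, v a • ((0 : ℝ), (Pi.single a 1 : ι → ℝ)) := by
    ext <;> simp [Prod.fst_sum, Prod.snd_sum, Finset.sum_apply, Pi.single_apply]
  rw [hv, map_add, map_sum]
  simp only [map_smul]

theorem fderiv_apply_velocity_add_mul_trace_eq_add_sum {ρ : ℝ × (ι → ℝ) → ℝ}
    {u : ℝ × (ι → ℝ) → ι → ℝ} {p : ℝ × (ι → ℝ)} (hρ : DifferentiableAt ℝ ρ p)
    (hu : DifferentiableAt ℝ u p) :
    fderiv ℝ ρ p (1, u p) + ρ p * LinearMap.trace ℝ _ (spatialFDeriv u p : (ι → ℝ) →ₗ[ℝ] ι → ℝ)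
      = fderiv ℝ ρ p (1, 0) + ∑ a, fderiv ℝ (fun y => ρ y * u y a) p (0, Pi.single a 1) := by
  simp only [apply_one_eq_add_sum (fderiv ℝ ρ p) (u p), LinearMap.trace_eq_sum_apply_single,
    fderiv_mul_coord_apply hρ hu, spatialFDeriv, coe_coe, comp_apply, inr_apply, Finset.mul_sum,
    Finset.sum_add_distrib, smul_eq_mul]
  ring

end Coordinates

theorem continuity_equation_general
    (n : ℕ)
    (φ : ℝ × (Fin n → ℝ) → (Fin n → ℝ)) (hφ : ContDiff ℝ 2 φ)
    (u : ℝ × (Fin n → ℝ) → (Fin n → ℝ)) (hu : ContDiff ℝ 1 u)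
    (hflow : ∀ (t : ℝ) (X : Fin n → ℝ), fderiv ℝ φ (t, X) (1, 0) = u (t, φ (t, X)))
    (F : ℝ → (Fin n → ℝ) → Matrix (Fin n) (Fin n) ℝ)
    (hF : ∀ t X a i, F t X a i = fderiv ℝ φ (t, X) (0, Pi.single i 1) a)
    (hdiffeo : ∀ t : ℝ, ∃ e : (Fin n → ℝ) ≃ (Fin n → ℝ),
      (∀ X, e X = φ (t, X)) ∧ ContDiff ℝ 1 (e.symm : (Fin n → ℝ) → (Fin n → ℝ)))
    (ρ : ℝ × (Fin n → ℝ) → ℝ) (hρ : ContDiff ℝ 1 ρ)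
    (ρ₀ : (Fin n → ℝ) → ℝ)
    (hmass : ∀ (t : ℝ) (X : Fin n → ℝ), ρ₀ X = ρ (t, φ (t, X)) * (F t X).det) :
    ∀ (t : ℝ) (x : Fin n → ℝ),
      fderiv ℝ ρ (t, x) (1, 0)
        + ∑ a : Fin n,
            fderiv ℝ (fun y : ℝ × (Fin n → ℝ) => ρ y * u y a) (t, x) (0, Pi.single a 1)
        = 0 := by
  intro t x
  obtain ⟨e, he, he_symm⟩ := hdiffeo t
  have hφe : Function.RightInverse e.symm (fun X => φ (t, X)) := fun y =>
    (he _).symm.trans (e.apply_symm_apply y)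
  set X := e.symm x
  have hX : φ (t, X) = x := hφe x
  have hJ : (spatialFDeriv φ (t, X)).det ≠ 0 :=
    det_ne_zero_of_rightInverse ((hφ.differentiable two_ne_zero) _).hasFDerivAt_spatialFDeriv
      (he_symm.differentiable one_ne_zero x) hφe
  have hdetF : ∀ s, (F s X).det = (spatialFDeriv φ (s, X)).det := fun s => by
    rw [det, ← LinearMap.det_toMatrix']
    congr 1
    ext a i
    simp [hF, spatialFDeriv, LinearMap.toMatrix'_apply]
  have hux := hu.differentiable one_ne_zero (t, x)
  have hρx := hρ.differentiable one_ne_zero (t, x)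
  have key := fderiv_apply_velocity_add_mul_trace_eq_zero hflow (fun s => by rw [← hdetF, ← hmass])
    hφ.contDiffAt (hX ▸ hux) (hX ▸ hρx) hJ
  rw [hX] at key
  rw [← fderiv_apply_velocity_add_mul_trace_eq_add_sum hρx hux, key]

/-- **Continuity equation**: in the continuum setup, if moreover each `φ(t,·)` is a C¹
diffeomorphism of `ℝⁿ`, `ρ` is C¹ and the mass relation
`ρ₀(X) = ρ(t, φ(t,X)) · det F(t,X)` holds, then
`∂ρ/∂t + div_x(ρ u) = 0` everywhere. -/
theorem continuity_equation
    (n : ℕ) (hn : 1 ≤ n)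
    (φ : ℝ × (Fin n → ℝ) → (Fin n → ℝ)) (hφ : ContDiff ℝ 2 φ)
    (u : ℝ × (Fin n → ℝ) → (Fin n → ℝ)) (hu : ContDiff ℝ 1 u)
    (hflow : ∀ (t : ℝ) (X : Fin n → ℝ), fderiv ℝ φ (t, X) (1, 0) = u (t, φ (t, X)))
    (F : ℝ → (Fin n → ℝ) → Matrix (Fin n) (Fin n) ℝ)
    (hF : ∀ t X a i, F t X a i = fderiv ℝ φ (t, X) (0, Pi.single i 1) a)
    (hdiffeo : ∀ t : ℝ, ∃ e : (Fin n → ℝ) ≃ (Fin n → ℝ),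
      (∀ X, e X = φ (t, X)) ∧ ContDiff ℝ 1 (e.symm : (Fin n → ℝ) → (Fin n → ℝ)))
    (ρ : ℝ × (Fin n → ℝ) → ℝ) (hρ : ContDiff ℝ 1 ρ)
    (ρ₀ : (Fin n → ℝ) → ℝ)
    (hmass : ∀ (t : ℝ) (X : Fin n → ℝ), ρ₀ X = ρ (t, φ (t, X)) * (F t X).det) :
    ∀ (t : ℝ) (x : Fin n → ℝ),
      fderiv ℝ ρ (t, x) (1, 0)
        + ∑ a : Fin n,
            fderiv ℝ (fun y : ℝ × (Fin n → ℝ) => ρ y * u y a) (t, x) (0, Pi.single a 1)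
        = 0 :=
  continuity_equation_general n φ hφ u hu hflow F hF hdiffeo ρ hρ ρ₀ hmass
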